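/- arXiv:math-ph/9901003 — 3 statements merged into one kernel-verified Lean document; each statement's English description precedes it below -/
import Mathlib

section
/- Let H₁, H₂, H₃ and H be complex Hilbert spaces and let j₁ : H₁ → H, j₂ : H₂ → H, j₃ : H₃ → H be continuous linear maps that are isometric (‖jᵢ x‖ = ‖x‖ for all x). Suppose the Markoff identity (j₁ ∘ j₁†) ∘ (j₂ ∘ j₂†) ∘ (j₃ ∘ j₃†) = (j₁ ∘ j₁†) ∘ (j₃ ∘ j₃†) holds as an identity of continuous linear maps H → H. Then (j₁† ∘ j₂) ∘ (j₂† ∘ j₃) = j₁† ∘ j₃ as continuous linear maps H₃ → H₁. -/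
open ContinuousLinearMap in
lemma adjoint_comp_self_of_isometry
    {E F : Type*} [NormedAddCommGroup E] [InnerProductSpace ℂ E] [CompleteSpace E]
    [NormedAddCommGroup F] [InnerProductSpace ℂ F] [CompleteSpace F]
    (j : E →L[ℂ] F) (hj : ∀ x, ‖j x‖ = ‖x‖) :
    (adjoint j).comp j = ContinuousLinearMap.id ℂ E := by
  ext x
  apply ext_inner_left ℂ
  intro y
  rw [ContinuousLinearMap.coe_comp', Function.comp_apply,
    ContinuousLinearMap.adjoint_inner_right, ContinuousLinearMap.coe_id', id_eq]
  exact (LinearIsometry.inner_map_map ⟨(j : E →ₗ[ℂ] F), hj⟩ y x)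

/-- The Markoff property `(j₁ ∘ j₁†) ∘ (j₂ ∘ j₂†) ∘ (j₃ ∘ j₃†) = (j₁ ∘ j₁†) ∘ (j₃ ∘ j₃†)`
for isometries `jᵢ : Hᵢ → H` implies the propagator composition law
`(j₁† ∘ j₂) ∘ (j₂† ∘ j₃) = j₁† ∘ j₃`. -/
theorem propagator_comp_of_markoff
    {H₁ H₂ H₃ H : Type*}
    [NormedAddCommGroup H₁] [InnerProductSpace ℂ H₁] [CompleteSpace H₁]
    [NormedAddCommGroup H₂] [InnerProductSpace ℂ H₂] [CompleteSpace H₂]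
    [NormedAddCommGroup H₃] [InnerProductSpace ℂ H₃] [CompleteSpace H₃]
    [NormedAddCommGroup H] [InnerProductSpace ℂ H] [CompleteSpace H]
    (j₁ : H₁ →L[ℂ] H) (j₂ : H₂ →L[ℂ] H) (j₃ : H₃ →L[ℂ] H)
    (hj₁ : ∀ x, ‖j₁ x‖ = ‖x‖) (hj₂ : ∀ x, ‖j₂ x‖ = ‖x‖) (hj₃ : ∀ x, ‖j₃ x‖ = ‖x‖)
    (hMarkoff :
      ((j₁.comp (ContinuousLinearMap.adjoint j₁)).comp
          (j₂.comp (ContinuousLinearMap.adjoint j₂))).comp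
        (j₃.comp (ContinuousLinearMap.adjoint j₃))
      = (j₁.comp (ContinuousLinearMap.adjoint j₁)).comp
          (j₃.comp (ContinuousLinearMap.adjoint j₃))) :
    ((ContinuousLinearMap.adjoint j₁).comp j₂).comp
        ((ContinuousLinearMap.adjoint j₂).comp j₃)
      = (ContinuousLinearMap.adjoint j₁).comp j₃ := by
  have h1 := adjoint_comp_self_of_isometry j₁ hj₁
  have h3 := adjoint_comp_self_of_isometry j₃ hj₃
  have := congrArg (fun A => ((ContinuousLinearMap.adjoint j₁).comp A).comp j₃) hMarkoff
  simp only [ContinuousLinearMap.comp_assoc] at this h1 h3 ⊢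
  have h1' : ∀ (A : H₃ →L[ℂ] H₁), (ContinuousLinearMap.adjoint j₁).comp (j₁.comp A) = A := by
    intro A
    rw [← ContinuousLinearMap.comp_assoc, h1, ContinuousLinearMap.id_comp]
  have h3' : ∀ (A : H₃ →L[ℂ] H₃), (ContinuousLinearMap.adjoint j₃).comp (j₃.comp A) = A := by
    intro A
    rw [← ContinuousLinearMap.comp_assoc, h3, ContinuousLinearMap.id_comp]
  have h3'' : (ContinuousLinearMap.adjoint j₃).comp j₃ = ContinuousLinearMap.id ℂ H₃ := h3
  simp only [h3, ContinuousLinearMap.comp_id] at this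
  rw [h1', h1'] at this
  exact this
end

section
/- Let E be a complex Banach space and let U : [0,∞) → (E →L E) satisfy U 0 = id, U (t₁ + t₂) = U t₁ ∘ U t₂ for all t₁, t₂ ≥ 0, and ‖U t‖ ≤ 1 for all t ≥ 0. Let ω > 0 and T₀ ≥ 0, and suppose the function t ↦ (e^{ωt} ‖U t‖)² is integrable on [T₀, ∞). Then there exists a constant M ≥ 1 such that ‖U t‖ ≤ M e^{-ωt} for all t ≥ 0. -/
/-!
Submultiplicativity and contractivity make `t ↦ ‖U t‖` nonincreasing. Hence for
`t ≥ T₀ + 1` the integrand `(e^{ωx} ‖U x‖)²` is at least `(e^{ω(t-1)} ‖U t‖)²` on the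
unit window `[t - 1, t]`, so this quantity is bounded by the whole integral `C`, giving
`‖U t‖ ≤ √C e^ω e^{-ωt}`. On `[0, T₀ + 1]` the bound `‖U t‖ ≤ 1` suffices.
-/

open MeasureTheory Set Real

theorem antitoneOn_norm_of_semigroup {A : Type*} [SeminormedRing A] {U : ℝ → A}
    (hmul : ∀ s t, 0 ≤ s → 0 ≤ t → U (s + t) = U s * U t)
    (hcontr : ∀ t, 0 ≤ t → ‖U t‖ ≤ 1) :
    AntitoneOn (fun t => ‖U t‖) (Ici 0) := by
  intro s hs t ht hst
  calc ‖U t‖ = ‖U (t - s) * U s‖ := by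
        rw [← hmul _ _ (sub_nonneg.2 hst) hs, sub_add_cancel]
    _ ≤ ‖U (t - s)‖ * ‖U s‖ := norm_mul_le _ _
    _ ≤ ‖U s‖ := mul_le_of_le_one_left (norm_nonneg _) (hcontr _ (sub_nonneg.2 hst))

theorem sq_exp_mul_le_setIntegral_Ici {φ : ℝ → ℝ} {ω a t : ℝ} (hω : 0 ≤ ω)
    (hφ : AntitoneOn φ (Ici a)) (hφ0 : 0 ≤ φ t) (ht : a + 1 ≤ t)
    (hint : IntegrableOn (fun x => (exp (ω * x) * φ x) ^ 2) (Ici a)) :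
    (exp (ω * (t - 1)) * φ t) ^ 2 ≤ ∫ x in Ici a, (exp (ω * x) * φ x) ^ 2 := by
  have hwindow : Icc (t - 1) t ⊆ Ici a := fun x hx => by simp only [mem_Ici]; linarith [hx.1]
  have hpointwise : ∀ x ∈ Icc (t - 1) t,
      (exp (ω * (t - 1)) * φ t) ^ 2 ≤ (exp (ω * x) * φ x) ^ 2 := by
    intro x hx
    have hexp : exp (ω * (t - 1)) ≤ exp (ω * x) :=
      exp_le_exp.2 (mul_le_mul_of_nonneg_left hx.1 hω)
    have hφx : φ t ≤ φ x := hφ (hwindow hx) (hwindow (right_mem_Icc.2 (by linarith))) hx.2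
    gcongr
  calc (exp (ω * (t - 1)) * φ t) ^ 2
      ≤ ∫ x in Icc (t - 1) t, (exp (ω * x) * φ x) ^ 2 := by
        simpa using setIntegral_ge_of_const_le measurableSet_Icc (by simp) hpointwise
          (hint.mono_set hwindow)
    _ ≤ ∫ x in Ici a, (exp (ω * x) * φ x) ^ 2 :=
        setIntegral_mono_set hint (.of_forall fun _ => sq_nonneg _) hwindow.eventuallyLE

theorem le_mul_exp_neg_of_antitoneOn {φ : ℝ → ℝ} {ω a t : ℝ} (hω : 0 ≤ ω)
    (hφ : AntitoneOn φ (Ici a)) (hφ0 : 0 ≤ φ t) (ht : a + 1 ≤ t)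
    (hint : IntegrableOn (fun x => (exp (ω * x) * φ x) ^ 2) (Ici a)) :
    φ t ≤ √(∫ x in Ici a, (exp (ω * x) * φ x) ^ 2) * exp ω * exp (-(ω * t)) := by
  have hroot : exp (ω * (t - 1)) * φ t ≤ √(∫ x in Ici a, (exp (ω * x) * φ x) ^ 2) :=
    le_sqrt_of_sq_le (sq_exp_mul_le_setIntegral_Ici hω hφ hφ0 ht hint)
  have hexp : exp ω * exp (-(ω * t)) * exp (ω * (t - 1)) = 1 := by
    rw [← exp_add, ← exp_add]; ring_nf; exact exp_zero
  calc φ t = exp ω * exp (-(ω * t)) * (exp (ω * (t - 1)) * φ t) := by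
        rw [← mul_assoc, hexp, one_mul]
    _ ≤ exp ω * exp (-(ω * t)) * √(∫ x in Ici a, (exp (ω * x) * φ x) ^ 2) := by gcongr
    _ = _ := by ring

theorem semigroup_exp_bound_of_integrable_general
    {E : Type*} [NormedAddCommGroup E] [NormedSpace ℂ E]
    (U : ℝ → E →L[ℂ] E)
    (hsg : ∀ t₁ t₂ : ℝ, 0 ≤ t₁ → 0 ≤ t₂ → U (t₁ + t₂) = (U t₁).comp (U t₂))
    (hcontr : ∀ t : ℝ, 0 ≤ t → ‖U t‖ ≤ 1)
    (ω T₀ : ℝ) (hω : 0 < ω) (hT₀ : 0 ≤ T₀)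
    (hint : IntegrableOn (fun t => (Real.exp (ω * t) * ‖U t‖) ^ 2) (Set.Ici T₀) volume) :
    ∃ M : ℝ, 1 ≤ M ∧ ∀ t : ℝ, 0 ≤ t → ‖U t‖ ≤ M * Real.exp (-(ω * t)) := by
  have hanti : AntitoneOn (fun t => ‖U t‖) (Ici T₀) :=
    (antitoneOn_norm_of_semigroup hsg hcontr).mono (Ici_subset_Ici.2 hT₀)
  refine ⟨max (exp (ω * (T₀ + 1)))
      (√(∫ t in Ici T₀, (exp (ω * t) * ‖U t‖) ^ 2) * exp ω),
    le_max_of_le_left (one_le_exp (mul_nonneg hω.le (by linarith))), fun t ht => ?_⟩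
  rcases le_or_gt t (T₀ + 1) with hsmall | hlarge
  · calc ‖U t‖ ≤ 1 := hcontr t ht
      _ ≤ exp (ω * (T₀ + 1)) * exp (-(ω * t)) := by
        rw [← exp_add]; exact one_le_exp (by nlinarith)
      _ ≤ _ := by gcongr; exact le_max_left _ _
  · calc ‖U t‖ ≤ _ := le_mul_exp_neg_of_antitoneOn (φ := fun t => ‖U t‖) hω.le hanti
          (norm_nonneg _) hlarge.le hint
      _ ≤ _ := by gcongr; exact le_max_right _ _

/-- A contraction semigroup `U` on a complex Banach space satisfying the integrability
estimate `∫_{T₀}^∞ (e^{ωt} ‖U t‖)² dt < ∞` with `ω > 0`, `T₀ ≥ 0` is exponentially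
bounded: `‖U t‖ ≤ M e^{-ωt}` for some `M ≥ 1` and all `t ≥ 0`. -/
theorem semigroup_exp_bound_of_integrable
    {E : Type*} [NormedAddCommGroup E] [NormedSpace ℂ E] [CompleteSpace E]
    (U : ℝ → E →L[ℂ] E)
    (h0 : U 0 = ContinuousLinearMap.id ℂ E)
    (hsg : ∀ t₁ t₂ : ℝ, 0 ≤ t₁ → 0 ≤ t₂ → U (t₁ + t₂) = (U t₁).comp (U t₂))
    (hcontr : ∀ t : ℝ, 0 ≤ t → ‖U t‖ ≤ 1)
    (ω T₀ : ℝ) (hω : 0 < ω) (hT₀ : 0 ≤ T₀)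
    (hint : IntegrableOn (fun t => (Real.exp (ω * t) * ‖U t‖) ^ 2) (Set.Ici T₀) volume) :
    ∃ M : ℝ, 1 ≤ M ∧ ∀ t : ℝ, 0 ≤ t → ‖U t‖ ≤ M * Real.exp (-(ω * t)) :=
  semigroup_exp_bound_of_integrable_general U hsg hcontr ω T₀ hω hT₀ hint
end

section
/- Let H be a complex Hilbert space and let U : [0,∞) → (H →L H) be a strongly continuous contraction semigroup: U 0 = id, U(t₁+t₂) = U t₁ ∘ U t₂, ‖U t‖ ≤ 1 for all t ≥ 0, and t ↦ U t f is continuous for each f ∈ H. Let ω > 0 and suppose that for every f ∈ H the function t ↦ (e^{ωt} ‖U t f‖)² is integrable on [0, ∞). Then there exists M ≥ 1 such that ‖U t‖ ≤ M e^{-ωt} for all t ≥ 0. -/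
open MeasureTheory

/-- (Datko-type bound.) A strongly continuous contraction semigroup `U` on a complex
Hilbert space such that `t ↦ (e^{ωt} ‖U t f‖)²` is integrable on `[0, ∞)` for every
vector `f` (with `ω > 0`) is uniformly exponentially bounded: there is `M ≥ 1` with
`‖U t‖ ≤ M e^{-ωt}` for all `t ≥ 0`. -/
theorem semigroup_exp_bound_of_vectorwise_integrable
    {H : Type*} [NormedAddCommGroup H] [InnerProductSpace ℂ H] [CompleteSpace H]
    (U : ℝ → H →L[ℂ] H)
    (h0 : U 0 = ContinuousLinearMap.id ℂ H)
    (hsg : ∀ t₁ t₂ : ℝ, 0 ≤ t₁ → 0 ≤ t₂ → U (t₁ + t₂) = (U t₁).comp (U t₂))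
    (hcontr : ∀ t : ℝ, 0 ≤ t → ‖U t‖ ≤ 1)
    (hcont : ∀ f : H, ContinuousOn (fun t => U t f) (Set.Ici (0 : ℝ)))
    (ω : ℝ) (hω : 0 < ω)
    (hint : ∀ f : H,
      IntegrableOn (fun t => (Real.exp (ω * t) * ‖U t f‖) ^ 2) (Set.Ici (0 : ℝ)) volume) :
    ∃ M : ℝ, 1 ≤ M ∧ ∀ t : ℝ, 0 ≤ t → ‖U t‖ ≤ M * Real.exp (-(ω * t)) := by
  -- monotonicity of t ↦ ‖U t f‖
  have mono : ∀ (f : H) (s t : ℝ), 0 ≤ s → s ≤ t → ‖U t f‖ ≤ ‖U s f‖ := by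
    intro f s t hs hst
    have h1 : U t = (U (t - s)).comp (U s) := by
      have := hsg (t - s) s (by linarith) hs
      rwa [sub_add_cancel] at this
    calc ‖U t f‖ = ‖U (t - s) (U s f)‖ := by rw [h1]; rfl
      _ ≤ ‖U (t - s)‖ * ‖U s f‖ := (U (t - s)).le_opNorm _
      _ ≤ 1 * ‖U s f‖ := by
          exact mul_le_mul_of_nonneg_right (hcontr _ (by linarith)) (norm_nonneg _)
      _ = ‖U s f‖ := one_mul _
  have normU0 : ∀ f : H, ‖U 0 f‖ = ‖f‖ := by intro f; rw [h0]; rfl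
  -- pointwise bound on e^{ωt} ‖U t f‖
  set T : ℝ := Real.log 2 / (2 * ω) with hT
  have hT0 : 0 ≤ T := div_nonneg (Real.log_nonneg (by norm_num)) (by linarith)
  have ptwise : ∀ f : H, ∃ C, ∀ t : ℝ, 0 ≤ t → Real.exp (ω * t) * ‖U t f‖ ≤ C := by
    intro f
    set Cf : ℝ := ∫ s in Set.Ici (0:ℝ), (Real.exp (ω * s) * ‖U s f‖) ^ 2 with hCf
    have hCf0 : 0 ≤ Cf := setIntegral_nonneg measurableSet_Ici (fun s _ => sq_nonneg _)
    -- key integral estimate for t > 0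
    have key : ∀ t : ℝ, 0 < t →
        ‖U t f‖ ^ 2 * ((Real.exp (2 * ω * t) - 1) / (2 * ω)) ≤ Cf := by
      intro t ht
      have hK : (0:ℝ) ≤ ‖U t f‖ ^ 2 := sq_nonneg _
      have hle : ∀ s ∈ Set.Ioc (0:ℝ) t,
          Real.exp (2 * ω * s) * ‖U t f‖ ^ 2 ≤ (Real.exp (ω * s) * ‖U s f‖) ^ 2 := by
        intro s hs
        have h1 : ‖U t f‖ ≤ ‖U s f‖ := mono f s t hs.1.le hs.2
        have h2 : Real.exp (2 * ω * s) = Real.exp (ω * s) ^ 2 := by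
          rw [sq, ← Real.exp_add]; ring_nf
        rw [h2, mul_pow]
        exact mul_le_mul_of_nonneg_left
          (pow_le_pow_left₀ (norm_nonneg _) h1 2) (sq_nonneg _)
      have hint1 : IntegrableOn (fun s => (Real.exp (ω * s) * ‖U s f‖) ^ 2)
          (Set.Ioc (0:ℝ) t) volume :=
        (hint f).mono_set (fun s hs => hs.1.le)
      have hint2 : IntegrableOn (fun s => Real.exp (2 * ω * s) * ‖U t f‖ ^ 2)
          (Set.Ioc (0:ℝ) t) volume := by
        apply Continuous.integrableOn_Ioc
        continuity
      have step1 : ∫ s in Set.Ioc (0:ℝ) t, Real.exp (2 * ω * s) * ‖U t f‖ ^ 2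
          ≤ ∫ s in Set.Ioc (0:ℝ) t, (Real.exp (ω * s) * ‖U s f‖) ^ 2 :=
        setIntegral_mono_on hint2 hint1 measurableSet_Ioc hle
      have step2 : ∫ s in Set.Ioc (0:ℝ) t, (Real.exp (ω * s) * ‖U s f‖) ^ 2 ≤ Cf := by
        apply setIntegral_mono_set (hint f)
        · exact Filter.Eventually.of_forall (fun s => sq_nonneg _)
        · exact Filter.Eventually.of_forall (fun s hs => hs.1.le)
      have calc1 : ∫ s in Set.Ioc (0:ℝ) t, Real.exp (2 * ω * s) * ‖U t f‖ ^ 2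
          = ‖U t f‖ ^ 2 * ((Real.exp (2 * ω * t) - 1) / (2 * ω)) := by
        rw [← intervalIntegral.integral_of_le ht.le]
        rw [intervalIntegral.integral_mul_const]
        have h2ω : (2 * ω) ≠ 0 := by positivity
        have : ∫ s in (0:ℝ)..t, Real.exp (2 * ω * s)
            = (Real.exp (2 * ω * t) - 1) / (2 * ω) := by
          have := intervalIntegral.integral_comp_mul_left
            (f := fun x => Real.exp x) (a := (0:ℝ)) (b := t) (c := 2 * ω) h2ω
          rw [this, integral_exp]
          simp [smul_eq_mul, mul_zero, Real.exp_zero]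
          ring
        rw [this]; ring
      linarith [step1, step2, calc1.symm.le]
    refine ⟨max (Real.sqrt (4 * ω * Cf)) (Real.exp (ω * T) * ‖f‖), fun t ht => ?_⟩
    by_cases htT : t ≤ T
    · refine le_trans ?_ (le_max_right _ _)
      have h1 : ‖U t f‖ ≤ ‖f‖ := by
        have := mono f 0 t le_rfl ht
        rwa [normU0] at this
      have h2 : Real.exp (ω * t) ≤ Real.exp (ω * T) :=
        Real.exp_le_exp.2 (by nlinarith)
      exact mul_le_mul h2 h1 (norm_nonneg _) (Real.exp_pos _).le
    · push_neg at htT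
      refine le_trans ?_ (le_max_left _ _)
      have ht0 : 0 < t := lt_of_le_of_lt hT0 htT
      have hE2 : (2:ℝ) ≤ Real.exp (2 * ω * t) := by
        have : Real.log 2 ≤ 2 * ω * t := by
          rw [hT] at htT
          have := (div_lt_iff₀ (by linarith : (0:ℝ) < 2 * ω)).1 htT
          linarith
        calc (2:ℝ) = Real.exp (Real.log 2) := (Real.exp_log (by norm_num)).symm
          _ ≤ Real.exp (2 * ω * t) := Real.exp_le_exp.2 this
      have hkey := key t ht0
      have hsq : (Real.exp (ω * t) * ‖U t f‖) ^ 2 ≤ 4 * ω * Cf := by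
        set E := Real.exp (2 * ω * t) with hE
        set K := ‖U t f‖ ^ 2 with hKdef
        have hK : (0:ℝ) ≤ K := sq_nonneg _
        have h1 : K * (E - 1) ≤ Cf * (2 * ω) := by
          rw [← mul_div_assoc] at hkey
          exact (div_le_iff₀ (by linarith : (0:ℝ) < 2 * ω)).1 hkey
        have h2 : Real.exp (ω * t) ^ 2 = E := by
          rw [hE, sq, ← Real.exp_add]; ring_nf
        rw [mul_pow, h2]
        nlinarith
      calc Real.exp (ω * t) * ‖U t f‖
          = Real.sqrt ((Real.exp (ω * t) * ‖U t f‖) ^ 2) :=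
            (Real.sqrt_sq (by positivity)).symm
        _ ≤ Real.sqrt (4 * ω * Cf) := Real.sqrt_le_sqrt hsq
  -- Banach–Steinhaus
  obtain ⟨C', hC'⟩ := banach_steinhaus
    (g := fun t : {t : ℝ // 0 ≤ t} => Real.exp (ω * t.1) • U t.1)
    (fun f => by
      obtain ⟨C, hC⟩ := ptwise f
      exact ⟨C, fun t => by
        rw [ContinuousLinearMap.smul_apply, norm_smul, Real.norm_eq_abs,
          abs_of_pos (Real.exp_pos _)]
        exact hC t.1 t.2⟩)
  refine ⟨max C' 1, le_max_right _ _, fun t ht => ?_⟩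
  have h1 : Real.exp (ω * t) * ‖U t‖ ≤ C' := by
    have := hC' ⟨t, ht⟩
    rwa [norm_smul, Real.norm_eq_abs, abs_of_pos (Real.exp_pos _)] at this
  have h2 : ‖U t‖ ≤ C' * Real.exp (-(ω * t)) := by
    have heq : ‖U t‖ = (Real.exp (ω * t) * ‖U t‖) * Real.exp (-(ω * t)) := by
      rw [Real.exp_neg]
      field_simp
    rw [heq]
    exact mul_le_mul_of_nonneg_right h1 (Real.exp_pos _).le
  calc ‖U t‖ ≤ C' * Real.exp (-(ω * t)) := h2
    _ ≤ max C' 1 * Real.exp (-(ω * t)) :=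
        mul_le_mul_of_nonneg_right (le_max_left _ _) (Real.exp_pos _).le
end
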